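/- arXiv:1907.05593 — 2 statements merged into one kernel-verified Lean document; each statement's English description precedes it below -/
import Mathlib

section
/- Under Assumptions 1 and 3, for every N≥1 there exists α_N∈(0,1) such that for every vector (h_1,…,h_N)∈ℝ^N with ∑_{i=1}^N h_i²=1 one has P(∑_{i=1}^N h_i(ε_i−b_i) < −α_N) > α_N (quantitative no-arbitrage condition in the small market with N random sources). -/
/-!
If every `ε i` falls below `b i` and rises above it with positive probability, then it does
so by some uniform margin `δ > 0` (continuity of measure), for the finitely many `i < N`.
Given a unit vector `h`, let every `ε i` move by at least `δ` against the sign of `h i`: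
by independence this has probability at least `∏ i, min (P {ε i < b i - δ}) (P {b i + δ < ε i})`,
a bound independent of `h`, and on this event `∑ h i (ε i - b i) ≤ -δ ∑ |h i| ≤ -δ`
since `∑ |h i| ≥ (∑ h i ^ 2) ^ (1/2) = 1`.
-/

open MeasureTheory Filter Topology ProbabilityTheory

section TailMargin

variable {Ω : Type*} [MeasurableSpace Ω] {μ : Measure Ω}

lemma eventually_pos_measure_lt_sub {X : Ω → ℝ} {c : ℝ} (h : 0 < μ {ω | X ω < c}) :
    ∀ᶠ δ in 𝓝[>] (0 : ℝ), 0 < μ {ω | X ω < c - δ} := by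
  have hunion : {ω | X ω < c} = ⋃ n : ℕ, {ω | X ω < c - 1 / (n + 1)} := by
    ext ω
    simp only [Set.mem_ofPred_eq, Set.mem_iUnion]
    refine ⟨fun hω => ?_, fun ⟨n, hn⟩ => hn.trans_le (sub_le_self _ (by positivity))⟩
    obtain ⟨n, hn⟩ := exists_nat_one_div_lt (sub_pos.2 hω)
    exact ⟨n, by linarith⟩
  obtain ⟨n, hn⟩ : ∃ n : ℕ, 0 < μ {ω | X ω < c - 1 / (n + 1)} := by
    simpa [pos_iff_ne_zero, hunion, measure_iUnion_null_iff] using h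
  filter_upwards [Ioo_mem_nhdsGT (show (0 : ℝ) < 1 / (n + 1) by positivity)] with δ hδ
  exact hn.trans_le (measure_mono fun ω (hω : X ω < _) => show X ω < c - δ by linarith [hδ.2])

lemma eventually_pos_measure_add_lt {X : Ω → ℝ} {c : ℝ} (h : 0 < μ {ω | c < X ω}) :
    ∀ᶠ δ in 𝓝[>] (0 : ℝ), 0 < μ {ω | c + δ < X ω} := by
  have h' : 0 < μ {ω | -X ω < -c} := by simpa only [neg_lt_neg_iff] using h
  filter_upwards [eventually_pos_measure_lt_sub h'] with δ hδ
  simpa only [← neg_add', neg_lt_neg_iff] using hδ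

end TailMargin

lemma exists_pos_lt_and_ofReal_lt {q : ENNReal} (hq : 0 < q) {δ : ℝ} (hδ : 0 < δ) :
    ∃ α : ℝ, 0 < α ∧ α < δ ∧ ENNReal.ofReal α < q := by
  obtain ⟨α, -, hα0, hα⟩ :=
    ENNReal.lt_iff_exists_real_btwn.1 (lt_min hq (ENNReal.ofReal_pos.2 hδ))
  exact ⟨α, ENNReal.ofReal_pos.1 hα0, (ENNReal.ofReal_lt_ofReal_iff hδ).1 (hα.trans_le
    (min_le_right _ _)), hα.trans_le (min_le_left _ _)⟩

lemma one_le_sum_abs_of_sum_sq_eq_one {ι : Type*} {s : Finset ι} {h : ι → ℝ}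
    (hh : ∑ i ∈ s, h i ^ 2 = 1) : 1 ≤ ∑ i ∈ s, |h i| := by
  have hsq : 1 ≤ (∑ i ∈ s, |h i|) ^ 2 := by
    calc (1 : ℝ) = ∑ i ∈ s, |h i| ^ 2 := by simp only [sq_abs, hh]
      _ ≤ (∑ i ∈ s, |h i|) ^ 2 := Finset.sum_sq_le_sq_sum_of_nonneg fun i _ => abs_nonneg _
  nlinarith [Finset.sum_nonneg fun i (_ : i ∈ s) => abs_nonneg (h i)]

section AdverseEvent

variable {Ω ι : Type*} (ε : ι → Ω → ℝ) (b : ι → ℝ) (δ : ℝ) (h : ι → ℝ)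

def adverseEvent (i : ι) : Set Ω :=
  if 0 ≤ h i then {ω | ε i ω < b i - δ} else {ω | b i + δ < ε i ω}

variable {ε b δ h}

lemma mul_sub_le_of_mem_adverseEvent {i : ι} {ω : Ω} (hω : ω ∈ adverseEvent ε b δ h i) :
    h i * (ε i ω - b i) ≤ -(|h i| * δ) := by
  unfold adverseEvent at hω
  split_ifs at hω with hs
  · have hlow : ε i ω < b i - δ := hω
    rw [abs_of_nonneg hs]
    nlinarith
  · have hhigh : b i + δ < ε i ω := hω
    rw [abs_of_neg (not_le.1 hs)]
    nlinarith

lemma sum_mul_sub_le_of_mem_iInter_adverseEvent [Fintype ι] (hh : ∑ i, h i ^ 2 = 1)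
    (hδ : 0 ≤ δ) {ω : Ω} (hω : ω ∈ ⋂ i, adverseEvent ε b δ h i) :
    ∑ i, h i * (ε i ω - b i) ≤ -δ := by
  calc ∑ i, h i * (ε i ω - b i)
      ≤ ∑ i, -(|h i| * δ) :=
        Finset.sum_le_sum fun i _ => mul_sub_le_of_mem_adverseEvent (Set.mem_iInter.1 hω i)
    _ = -((∑ i, |h i|) * δ) := by rw [Finset.sum_neg_distrib, Finset.sum_mul]
    _ ≤ -δ := by nlinarith [one_le_sum_abs_of_sum_sq_eq_one hh]

lemma prod_min_le_measure_iInter_adverseEvent [Fintype ι] [MeasurableSpace Ω] {μ : Measure Ω}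
    (hindep : iIndepFun ε μ) :
    ∏ i, min (μ {ω | ε i ω < b i - δ}) (μ {ω | b i + δ < ε i ω}) ≤
      μ (⋂ i, adverseEvent ε b δ h i) := by
  have hmeas : ∀ i, MeasurableSet[MeasurableSpace.comap (ε i) inferInstance]
      (adverseEvent ε b δ h i) := by
    intro i
    unfold adverseEvent
    split_ifs
    · exact ⟨Set.Iio (b i - δ), measurableSet_Iio, rfl⟩
    · exact ⟨Set.Ioi (b i + δ), measurableSet_Ioi, rfl⟩
  rw [hindep.meas_iInter hmeas]
  refine Finset.prod_le_prod' fun i _ => ?_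
  unfold adverseEvent
  split_ifs
  · exact min_le_left _ _
  · exact min_le_right _ _

end AdverseEvent

theorem quantitative_no_arbitrage_small_market_general
    {Ω : Type*} [MeasurableSpace Ω] (P : Measure Ω)
    (ε : ℕ → Ω → ℝ) (b : ℕ → ℝ)
    (hindep : iIndepFun ε P)
    (hNA : ∀ i, 0 < P {ω | b i < ε i ω} ∧ 0 < P {ω | ε i ω < b i})
    (N : ℕ) :
    ∃ α : ℝ, α ∈ Set.Ioo (0 : ℝ) 1 ∧
      ∀ h : Fin N → ℝ, (∑ i, (h i) ^ 2) = 1 →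
        ENNReal.ofReal α <
          P {ω | ∑ i : Fin N, h i * (ε i ω - b i) < -α} := by
  obtain ⟨δ, hδ, htails⟩ : ∃ δ : ℝ, 0 < δ ∧ ∀ i : Fin N,
      0 < P {ω | ε i ω < b i - δ} ∧ 0 < P {ω | b i + δ < ε i ω} :=
    (eventually_mem_nhdsWithin.and <| eventually_all.2 fun i : Fin N =>
      (eventually_pos_measure_lt_sub (hNA i).2).and (eventually_pos_measure_add_lt (hNA i).1)).exists
  have hq : 0 < ∏ i : Fin N, min (P {ω | ε i ω < b i - δ}) (P {ω | b i + δ < ε i ω}) :=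
    CanonicallyOrderedAdd.prod_pos.2 fun i _ => lt_min (htails i).1 (htails i).2
  obtain ⟨α, hα0, hαδ, hαq⟩ := exists_pos_lt_and_ofReal_lt hq (lt_min hδ one_pos)
  refine ⟨α, ⟨hα0, hαδ.trans_le (min_le_right _ _)⟩, fun h hh => ?_⟩
  have hindepN : iIndepFun (fun i : Fin N => ε i) P := hindep.precomp Fin.val_injective
  calc ENNReal.ofReal α
      < P (⋂ i, adverseEvent (fun i : Fin N => ε i) (fun i => b i) δ h i) :=
        hαq.trans_le (prod_min_le_measure_iInter_adverseEvent hindepN)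
    _ ≤ P {ω | ∑ i : Fin N, h i * (ε i ω - b i) < -α} := measure_mono fun ω hω =>
        (sum_mul_sub_le_of_mem_iInter_adverseEvent hh hδ.le hω).trans_lt
          (neg_lt_neg (hαδ.trans_le (min_le_left _ _)))

/-- under Assumptions 1 and 3, for every `N ≥ 1` there is
`α_N ∈ (0,1)` such that every unit vector `(h_1,…,h_N)` satisfies the
quantitative no-arbitrage condition
`P(∑_{i=1}^N h_i (ε_i - b_i) < -α_N) > α_N`. -/
theorem quantitative_no_arbitrage_small_market
    {Ω : Type*} [MeasurableSpace Ω] (P : Measure Ω) [IsProbabilityMeasure P]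
    (ε : ℕ → Ω → ℝ) (b : ℕ → ℝ)
    (hmeas : ∀ i, Measurable (ε i))
    (hL2 : ∀ i, MemLp (ε i) 2 P)
    (hindep : iIndepFun ε P)
    (hmean : ∀ i, ∫ ω, ε i ω ∂P = 0)
    (hvar : ∀ i, ∫ ω, (ε i ω) ^ 2 ∂P = 1)
    (hNA : ∀ i, 0 < P {ω | b i < ε i ω} ∧ 0 < P {ω | ε i ω < b i})
    (N : ℕ) (hN : 1 ≤ N) :
    ∃ α : ℝ, α ∈ Set.Ioo (0 : ℝ) 1 ∧
      ∀ h : Fin N → ℝ, (∑ i, (h i) ^ 2) = 1 →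
        ENNReal.ofReal α <
          P {ω | ∑ i : Fin N, h i * (ε i ω - b i) < -α} :=
  quantitative_no_arbitrage_small_market_general P ε b hindep hNA N
end

section
/- Under Assumptions 1, 2, 3 and 4, there exists α>0 such that for every h∈ℓ² with ‖h‖_{ℓ²}=1 one has P(⟨h,ε⟩ < −α) > α, where ⟨h,ε⟩ denotes the L²(P)-limit of the partial sums ∑_{i=1}^n h_i ε_i (quantitative no-arbitrage condition in the large market). -/
open MeasureTheory Filter Topology ProbabilityTheory
open scoped ENNReal

/-- Convergence in `L²(P)` of the partial sums `∑_{i<n} Y i` to `S`. -/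
def IsL2Limit {Ω : Type*} [MeasurableSpace Ω] (P : Measure Ω)
    (Y : ℕ → Ω → ℝ) (S : Ω → ℝ) : Prop :=
  Tendsto (fun n => eLpNorm (fun ω => (∑ i ∈ Finset.range n, Y i ω) - S ω) 2 P)
    atTop (𝓝 0)

/-!
The partial sums `T n = ∑_{i<n} h i * ε i` are centred with `E[T n ^ 2] = ∑_{i<n} h i ^ 2 ≤ 1`.
Expanding `|Y + Z|³` for independent `Y`, `Z` with `E Z = 0` gives
`E|Y + Z|³ ≤ E|Y|³ + 3 E|Y| E[Z²] + 3 E|Z|³`, hence `E|T n|³ ≤ 3 (1 + C)` uniformly in `h`,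
where `C` bounds the third absolute moments of the `ε i`. These moments pass to the `L²` limit `S`
(continuity of the inner product, and Fatou along an a.e. convergent subsequence), so `E S = 0`,
`E[S²] = 1` and `E|S|³ ≤ K := 3 (1 + C)`. Then `s² ≤ a|s| + |s|³/(4a)` gives `E|S| ≥ 1/K`, so the
negative part of `S` has mean at least `1/(2K)`. Cutting that negative part at level `α` and
bounding its tail by AM-GM against `E[S²]` gives `P(S < -α) ≥ 3/(16 K²) > α` for `α = 1/(16 K²)`.
-/

open Finset

lemma abs_add_pow_three_le (a b : ℝ) :
    |a + b| ^ 3 ≤ |a| ^ 3 + 3 * (a * |a| * b) + 3 * (|a| * b ^ 2) + 3 * |b| ^ 3 := by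
  rcases abs_cases a with ⟨ha, ha'⟩ | ⟨ha, ha'⟩ <;>
  rcases abs_cases b with ⟨hb, hb'⟩ | ⟨hb, hb'⟩ <;>
  rcases abs_cases (a + b) with ⟨hab, hab'⟩ | ⟨hab, hab'⟩ <;>
  rw [ha, hb, hab] <;>
  nlinarith [sq_nonneg (a + b), sq_nonneg (a - b), sq_nonneg a, sq_nonneg b,
    sq_nonneg (a + 2 * b), sq_nonneg (2 * a + b)]

lemma sq_le_mul_abs_add_abs_pow_three_div {a : ℝ} (ha : 0 < a) (s : ℝ) :
    s ^ 2 ≤ a * |s| + |s| ^ 3 / (4 * a) := by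
  rw [← sub_le_iff_le_add', le_div_iff₀ (by positivity), ← sq_abs]
  nlinarith [mul_nonneg (abs_nonneg s) (sq_nonneg (|s| - 2 * a))]

lemma abs_sub_self_div_two_le {c α : ℝ} (hc : 0 < c) (hα : 0 ≤ α) (s : ℝ) :
    (|s| - s) / 2 ≤ α + {x : ℝ | x < -α}.indicator (fun _ => 1 / (2 * c)) s + c / 2 * s ^ 2 := by
  by_cases hs : s < -α
  · have amgm : -s ≤ 1 / (2 * c) + c / 2 * s ^ 2 := by
      have := sq_nonneg (c * s + 1)
      field_simp
      nlinarith
    rw [Set.indicator_of_mem (by exact hs), abs_of_neg (by linarith)]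
    linarith
  · have : 0 ≤ c / 2 * s ^ 2 := by positivity
    rw [Set.indicator_of_notMem (by exact hs)]
    rcases abs_cases s with ⟨h, -⟩ | ⟨h, -⟩ <;> rw [h] <;> linarith

section Moments

variable {Ω : Type*} [MeasurableSpace Ω] {P : Measure Ω}

lemma integrable_and_integral_le_of_lintegral_ofReal_le {f : Ω → ℝ}
    (hf : AEStronglyMeasurable f P) (hf0 : ∀ ω, 0 ≤ f ω) {B : ℝ} (hB : 0 ≤ B)
    (hfB : ∫⁻ ω, ENNReal.ofReal (f ω) ∂P ≤ ENNReal.ofReal B) :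
    Integrable f P ∧ ∫ ω, f ω ∂P ≤ B := by
  refine ⟨⟨hf, (hasFiniteIntegral_iff_ofReal (ae_of_all _ hf0)).2
    (hfB.trans_lt ENNReal.ofReal_lt_top)⟩, ?_⟩
  rw [integral_eq_lintegral_of_nonneg_ae (ae_of_all _ hf0) hf]
  exact ENNReal.toReal_le_of_le_ofReal hB hfB

lemma integral_abs_le_one_add_integral_sq_div_two [IsProbabilityMeasure P] {Y : Ω → ℝ}
    (hY : MemLp Y 2 P) : ∫ ω, |Y ω| ∂P ≤ (1 + ∫ ω, Y ω ^ 2 ∂P) / 2 := by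
  have hle : ∀ ω, |Y ω| ≤ (1 + Y ω ^ 2) / 2 := fun ω => by
    nlinarith [sq_nonneg (|Y ω| - 1), sq_abs (Y ω)]
  calc ∫ ω, |Y ω| ∂P ≤ ∫ ω, (1 + Y ω ^ 2) / 2 ∂P :=
        integral_mono (hY.integrable one_le_two).abs
          (((integrable_const 1).add hY.integrable_sq).div_const 2) hle
    _ = (1 + ∫ ω, Y ω ^ 2 ∂P) / 2 := by
        rw [integral_div, integral_add (integrable_const 1) hY.integrable_sq]
        simp

lemma tendsto_integral_mul_of_tendsto_eLpNorm {ι : Type*} {l : Filter ι} {F G : ι → Ω → ℝ}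
    {f g : Ω → ℝ} (hF : ∀ i, MemLp (F i) 2 P) (hf : MemLp f 2 P) (hG : ∀ i, MemLp (G i) 2 P)
    (hg : MemLp g 2 P) (hFf : Tendsto (fun i => eLpNorm (F i - f) 2 P) l (𝓝 0))
    (hGg : Tendsto (fun i => eLpNorm (G i - g) 2 P) l (𝓝 0)) :
    Tendsto (fun i => ∫ ω, F i ω * G i ω ∂P) l (𝓝 (∫ ω, f ω * g ω ∂P)) := by
  have inner_toLp : ∀ {u v : Ω → ℝ} (hu : MemLp u 2 P) (hv : MemLp v 2 P),
      inner ℝ (hu.toLp u) (hv.toLp v) = ∫ ω, u ω * v ω ∂P := fun hu hv => by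
    rw [L2.inner_def]
    refine integral_congr_ae ?_
    filter_upwards [hu.coeFn_toLp, hv.coeFn_toLp] with ω hu' hv'
    rw [hu', hv', real_inner_eq_re_inner, RCLike.inner_apply, conj_trivial, RCLike.re_to_real,
      mul_comm]
  simpa only [inner_toLp] using ((Lp.tendsto_Lp_iff_tendsto_eLpNorm'' F hF f hf).2 hFf).inner
    ((Lp.tendsto_Lp_iff_tendsto_eLpNorm'' G hG g hg).2 hGg) (𝕜 := ℝ)

lemma lintegral_comp_le_of_tendstoInMeasure {F : ℕ → Ω → ℝ} {f : Ω → ℝ} {g : ℝ → ℝ≥0∞}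
    (hg : Continuous g) (hF : ∀ n, AEMeasurable (F n) P) (hFf : TendstoInMeasure P F atTop f)
    {B : ℝ≥0∞} (hB : ∀ n, ∫⁻ ω, g (F n ω) ∂P ≤ B) :
    ∫⁻ ω, g (f ω) ∂P ≤ B := by
  obtain ⟨ns, -, hae⟩ := hFf.exists_seq_tendsto_ae
  calc ∫⁻ ω, g (f ω) ∂P = ∫⁻ ω, liminf (fun k => g (F (ns k) ω)) atTop ∂P :=
        lintegral_congr_ae (hae.mono fun ω hω => (((hg.tendsto _).comp hω).liminf_eq).symm)
    _ ≤ liminf (fun k => ∫⁻ ω, g (F (ns k) ω) ∂P) atTop :=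
        lintegral_liminf_le' fun k => hg.measurable.comp_aemeasurable (hF (ns k))
    _ ≤ B := liminf_le_of_frequently_le' (Frequently.of_forall fun k => hB (ns k))

lemma integral_abs_add_pow_three_le [IsFiniteMeasure P] {Y Z : Ω → ℝ}
    (hY : MemLp Y 2 P) (hZ : MemLp Z 2 P)
    (hY3 : Integrable (fun ω => |Y ω| ^ 3) P) (hZ3 : Integrable (fun ω => |Z ω| ^ 3) P)
    (hYZ : IndepFun Y Z P) (hZ0 : ∫ ω, Z ω ∂P = 0) :
    Integrable (fun ω => |Y ω + Z ω| ^ 3) P ∧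
      ∫ ω, |Y ω + Z ω| ^ 3 ∂P ≤
        ∫ ω, |Y ω| ^ 3 ∂P + 3 * ((∫ ω, |Y ω| ∂P) * ∫ ω, Z ω ^ 2 ∂P) + 3 * ∫ ω, |Z ω| ^ 3 ∂P := by
  have hYm := hY.1
  have hZm := hZ.1
  have hYY : Integrable (fun ω => Y ω * |Y ω|) P :=
    hY.integrable_sq.mono' (by fun_prop) (ae_of_all _ fun ω => by simp [sq])
  have hYZ₁ : IndepFun (fun ω => Y ω * |Y ω|) Z P :=
    hYZ.comp (measurable_id.mul measurable_abs) measurable_id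
  have hYZ₂ : IndepFun (fun ω => |Y ω|) (fun ω => Z ω ^ 2) P :=
    hYZ.comp measurable_abs (measurable_id.pow_const 2)
  have hZint : Integrable Z P := hZ.integrable one_le_two
  have hYabs : Integrable (fun ω => |Y ω|) P := (hY.integrable one_le_two).abs
  have hint₁ : Integrable (fun ω => Y ω * |Y ω| * Z ω) P := hYZ₁.integrable_mul hYY hZint
  have hint₂ : Integrable (fun ω => |Y ω| * Z ω ^ 2) P := hYZ₂.integrable_mul hYabs hZ.integrable_sq
  have hrhs : Integrable (fun ω =>
      |Y ω| ^ 3 + 3 * (Y ω * |Y ω| * Z ω) + 3 * (|Y ω| * Z ω ^ 2) + 3 * |Z ω| ^ 3) P := by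
    fun_prop
  have hint : Integrable (fun ω => |Y ω + Z ω| ^ 3) P :=
    hrhs.mono' (by fun_prop) (ae_of_all _ fun ω => by
      rw [Real.norm_of_nonneg (by positivity)]; exact abs_add_pow_three_le (Y ω) (Z ω))
  refine ⟨hint, (integral_mono hint hrhs fun ω => abs_add_pow_three_le (Y ω) (Z ω)).trans_eq ?_⟩
  have hmul₁ : ∫ ω, Y ω * |Y ω| * Z ω ∂P = 0 := by
    simpa [hZ0] using hYZ₁.integral_fun_mul_eq_mul_integral hYY.1 hZm
  have hmul₂ : ∫ ω, |Y ω| * Z ω ^ 2 ∂P = (∫ ω, |Y ω| ∂P) * ∫ ω, Z ω ^ 2 ∂P :=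
    hYZ₂.integral_fun_mul_eq_mul_integral hYabs.1 hZ.integrable_sq.1
  rw [integral_add (by fun_prop) (by fun_prop), integral_add (by fun_prop) (by fun_prop),
    integral_add hY3 (by fun_prop), integral_const_mul, integral_const_mul, integral_const_mul,
    hmul₁, hmul₂, mul_zero, add_zero]

lemma integral_abs_sum_range_pow_three_le [IsFiniteMeasure P] {X : ℕ → Ω → ℝ}
    (hX : ∀ i, MemLp (X i) 2 P) (hX3 : ∀ i, Integrable (fun ω => |X i ω| ^ 3) P)
    (hind : iIndepFun X P) (hX0 : ∀ i, ∫ ω, X i ω ∂P = 0) (n : ℕ) :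
    Integrable (fun ω => |∑ i ∈ range n, X i ω| ^ 3) P ∧
      ∫ ω, |∑ i ∈ range n, X i ω| ^ 3 ∂P ≤
        ∑ i ∈ range n, (3 * ((∫ ω, |∑ j ∈ range i, X j ω| ∂P) * ∫ ω, X i ω ^ 2 ∂P)
          + 3 * ∫ ω, |X i ω| ^ 3 ∂P) := by
  induction n with
  | zero => simp
  | succ n ih =>
    have hindep : IndepFun (fun ω => ∑ j ∈ range n, X j ω) (X n) P := by
      simpa only [← Finset.sum_fn] using
        hind.indepFun_sum_range_succ₀ (fun i => (hX i).1.aemeasurable) n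
    obtain ⟨hint, hle⟩ := integral_abs_add_pow_three_le (memLp_finsetSum _ fun i _ => hX i) (hX n)
      ih.1 (hX3 n) hindep (hX0 n)
    simp only [sum_range_succ]
    exact ⟨hint, by linarith [ih.2]⟩

lemma inv_le_integral_abs_of_integral_abs_pow_three_le [IsProbabilityMeasure P] {S : Ω → ℝ}
    {K : ℝ} (hK : 0 < K) (hS : MemLp S 2 P) (hS3 : Integrable (fun ω => |S ω| ^ 3) P)
    (hvar : ∫ ω, S ω ^ 2 ∂P = 1) (hS3K : ∫ ω, |S ω| ^ 3 ∂P ≤ K) :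
    K⁻¹ ≤ ∫ ω, |S ω| ∂P := by
  have hSabs : Integrable (fun ω => |S ω|) P := (hS.integrable one_le_two).abs
  have hamgm : 1 ≤ K / 2 * ∫ ω, |S ω| ∂P + (∫ ω, |S ω| ^ 3 ∂P) / (2 * K) := by
    calc 1 = ∫ ω, S ω ^ 2 ∂P := hvar.symm
      _ ≤ ∫ ω, (K / 2 * |S ω| + |S ω| ^ 3 / (4 * (K / 2))) ∂P :=
          integral_mono hS.integrable_sq ((hSabs.const_mul _).add (hS3.div_const _))
            fun ω => sq_le_mul_abs_add_abs_pow_three_div (by positivity) (S ω)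
      _ = _ := by
          rw [integral_add (hSabs.const_mul _) (hS3.div_const _), integral_const_mul, integral_div]
          ring
  have : (∫ ω, |S ω| ^ 3 ∂P) / (2 * K) ≤ 1 / 2 := by
    rw [div_le_iff₀ (by positivity)]; linarith
  rw [inv_le_iff_one_le_mul₀ hK]
  linarith

lemma integral_abs_sub_div_two_le [IsProbabilityMeasure P] {S : Ω → ℝ} (hS : MemLp S 2 P)
    {c α : ℝ} (hc : 0 < c) (hα : 0 ≤ α) :
    ∫ ω, (|S ω| - S ω) / 2 ∂P ≤ α + P.real {ω | S ω < -α} / (2 * c) + c / 2 * ∫ ω, S ω ^ 2 ∂P := by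
  have hA : NullMeasurableSet {ω | S ω < -α} P :=
    nullMeasurableSet_lt hS.1.aemeasurable aemeasurable_const
  have hind : Integrable ({ω | S ω < -α}.indicator fun _ => 1 / (2 * c)) P :=
    (integrable_const _).indicator₀ hA
  have hconst_ind : Integrable (fun ω => α + {ω | S ω < -α}.indicator (fun _ => 1 / (2 * c)) ω) P :=
    (integrable_const α).add hind
  calc ∫ ω, (|S ω| - S ω) / 2 ∂P
      ≤ ∫ ω, (α + {ω | S ω < -α}.indicator (fun _ => 1 / (2 * c)) ω + c / 2 * S ω ^ 2) ∂P :=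
        integral_mono (((hS.integrable one_le_two).abs.sub (hS.integrable one_le_two)).div_const 2)
          (hconst_ind.add (hS.integrable_sq.const_mul _))
          fun ω => abs_sub_self_div_two_le hc hα (S ω)
    _ = _ := by
        rw [integral_add hconst_ind (hS.integrable_sq.const_mul _),
          integral_add (integrable_const α) hind, integral_const_mul, integral_indicator₀ hA,
          setIntegral_const]
        simp only [integral_const, smul_eq_mul, probReal_univ, one_mul]
        ring

lemma ofReal_lt_measure_lt_neg_of_le_integral_abs [IsProbabilityMeasure P] {S : Ω → ℝ}
    (hS : MemLp S 2 P) (hmean : ∫ ω, S ω ∂P = 0) (hvar : ∫ ω, S ω ^ 2 ∂P = 1) {m : ℝ}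
    (hm : 0 < m) (hmS : m ≤ ∫ ω, |S ω| ∂P) :
    ENNReal.ofReal (m ^ 2 / 16) < P {ω | S ω < -(m ^ 2 / 16)} := by
  have hm1 : m ≤ 1 := by
    linarith [integral_abs_le_one_add_integral_sq_div_two hS]
  have hneg : m / 2 ≤ ∫ ω, (|S ω| - S ω) / 2 ∂P := by
    rw [integral_div, integral_sub (hS.integrable one_le_two).abs (hS.integrable one_le_two), hmean]
    linarith
  have htail := integral_abs_sub_div_two_le hS (half_pos hm) (by positivity : 0 ≤ m ^ 2 / 16)
  rw [hvar, show 2 * (m / 2) = m by ring] at htail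
  have hprob : (m / 4 - m ^ 2 / 16) * m ≤ P.real {ω | S ω < -(m ^ 2 / 16)} :=
    (le_div_iff₀ hm).1 (by linarith)
  rw [ENNReal.ofReal_lt_iff_lt_toReal (by positivity) (measure_ne_top _ _), ← measureReal_def]
  nlinarith

variable {ε : ℕ → Ω → ℝ} (h : ℕ → ℝ) {S : Ω → ℝ}

lemma memLp_sum_range_mul (hL2 : ∀ i, MemLp (ε i) 2 P) (n : ℕ) :
    MemLp (fun ω => ∑ i ∈ range n, h i * ε i ω) 2 P :=
  memLp_finsetSum _ fun i _ => (hL2 i).const_mul (h i)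

lemma integral_sum_range_mul_eq_zero [IsFiniteMeasure P] (hL2 : ∀ i, MemLp (ε i) 2 P)
    (hmean : ∀ i, ∫ ω, ε i ω ∂P = 0) (n : ℕ) :
    ∫ ω, ∑ i ∈ range n, h i * ε i ω ∂P = 0 := by
  rw [integral_finsetSum _ fun i _ => ((hL2 i).integrable one_le_two).const_mul (h i)]
  simp [integral_const_mul, hmean]

lemma integral_sum_range_mul_sq [IsFiniteMeasure P] (hL2 : ∀ i, MemLp (ε i) 2 P)
    (hindep : iIndepFun ε P) (hmean : ∀ i, ∫ ω, ε i ω ∂P = 0)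
    (hvar : ∀ i, ∫ ω, ε i ω ^ 2 ∂P = 1) (n : ℕ) :
    ∫ ω, (∑ i ∈ range n, h i * ε i ω) ^ 2 ∂P = ∑ i ∈ range n, h i ^ 2 := by
  have hvar_sum := IndepFun.variance_sum (s := range n) (fun i _ => (hL2 i).const_mul (h i))
    fun i _ j _ hij =>
      (hindep.indepFun hij).comp (measurable_const_mul (h i)) (measurable_const_mul (h j))
  rw [← variance_of_integral_eq_zero (memLp_sum_range_mul h hL2 n).1.aemeasurable
    (integral_sum_range_mul_eq_zero h hL2 hmean n)]
  simp only [← Finset.sum_fn] at hvar_sum ⊢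
  rw [hvar_sum]
  refine sum_congr rfl fun i _ => ?_
  rw [variance_const_mul, variance_of_integral_eq_zero (hL2 i).1.aemeasurable (hmean i), hvar i,
    mul_one]

lemma integral_abs_sum_range_mul_pow_three_le [IsProbabilityMeasure P]
    (hL2 : ∀ i, MemLp (ε i) 2 P) (hindep : iIndepFun ε P) (hmean : ∀ i, ∫ ω, ε i ω ∂P = 0)
    (hvar : ∀ i, ∫ ω, ε i ω ^ 2 ∂P = 1) {C : ℝ} (hε3 : ∀ i, Integrable (fun ω => |ε i ω| ^ 3) P)
    (hC : ∀ i, ∫ ω, |ε i ω| ^ 3 ∂P ≤ C) (hh : ∀ n, ∑ i ∈ range n, h i ^ 2 ≤ 1) (n : ℕ) :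
    Integrable (fun ω => |∑ i ∈ range n, h i * ε i ω| ^ 3) P ∧
      ∫ ω, |∑ i ∈ range n, h i * ε i ω| ^ 3 ∂P ≤ 3 * (1 + C) := by
  have habs_pow : ∀ i ω, |h i * ε i ω| ^ 3 = |h i| ^ 3 * |ε i ω| ^ 3 := fun i ω => by
    rw [abs_mul, mul_pow]
  obtain ⟨hint, hle⟩ := integral_abs_sum_range_pow_three_le (X := fun i ω => h i * ε i ω)
    (fun i => (hL2 i).const_mul (h i))
    (fun i => by simpa only [habs_pow] using (hε3 i).const_mul _)
    (hindep.comp (fun i t => h i * t) fun i => measurable_const_mul (h i))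
    (fun i => by simp [integral_const_mul, hmean]) n
  have hC0 : 0 ≤ C := (integral_nonneg fun ω => by positivity).trans (hC 0)
  have hterm : ∀ i, 3 * ((∫ ω, |∑ j ∈ range i, h j * ε j ω| ∂P) * ∫ ω, (h i * ε i ω) ^ 2 ∂P)
      + 3 * ∫ ω, |h i * ε i ω| ^ 3 ∂P ≤ 3 * (1 + C) * h i ^ 2 := fun i => by
    have hsum_abs : ∫ ω, |∑ j ∈ range i, h j * ε j ω| ∂P ≤ 1 :=
      (integral_abs_le_one_add_integral_sq_div_two (memLp_sum_range_mul h hL2 i)).trans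
        (by linarith [integral_sum_range_mul_sq h hL2 hindep hmean hvar i, hh i])
    have hhi : |h i| ≤ 1 := by
      rw [← sq_le_one_iff_abs_le_one]
      exact (single_le_sum (fun j _ => sq_nonneg (h j)) (self_mem_range_succ i)).trans (hh (i + 1))
    have hcube : |h i| ^ 3 * ∫ ω, |ε i ω| ^ 3 ∂P ≤ h i ^ 2 * C := by
      rw [← sq_abs]
      calc |h i| ^ 3 * ∫ ω, |ε i ω| ^ 3 ∂P ≤ |h i| ^ 2 * ∫ ω, |ε i ω| ^ 3 ∂P := by
            refine mul_le_mul_of_nonneg_right ?_ (integral_nonneg fun ω => by positivity)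
            exact pow_le_pow_of_le_one (abs_nonneg _) hhi (by norm_num)
        _ ≤ |h i| ^ 2 * C := mul_le_mul_of_nonneg_left (hC i) (by positivity)
    simp only [mul_pow, integral_const_mul, hvar, habs_pow]
    nlinarith [sq_nonneg (h i)]
  refine ⟨hint, ?_⟩
  calc _ ≤ _ := hle
    _ ≤ ∑ i ∈ range n, 3 * (1 + C) * h i ^ 2 := sum_le_sum fun i _ => hterm i
    _ ≤ 3 * (1 + C) := by
        rw [← mul_sum]
        exact mul_le_of_le_one_right (by positivity) (hh n)

variable {h}

lemma IsL2Limit.integral_eq_zero [IsFiniteMeasure P]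
    (hlim : IsL2Limit P (fun i ω => h i * ε i ω) S)
    (hL2 : ∀ i, MemLp (ε i) 2 P) (hmean : ∀ i, ∫ ω, ε i ω ∂P = 0) (hS : MemLp S 2 P) :
    ∫ ω, S ω ∂P = 0 := by
  have := tendsto_integral_mul_of_tendsto_eLpNorm (memLp_sum_range_mul h hL2) hS
    (fun _ => memLp_const 1) (memLp_const 1) hlim (by simp)
  simp only [mul_one, integral_sum_range_mul_eq_zero h hL2 hmean] at this
  exact tendsto_nhds_unique this tendsto_const_nhds

lemma IsL2Limit.integral_sq_eq_tsum [IsFiniteMeasure P]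
    (hlim : IsL2Limit P (fun i ω => h i * ε i ω) S)
    (hL2 : ∀ i, MemLp (ε i) 2 P) (hindep : iIndepFun ε P) (hmean : ∀ i, ∫ ω, ε i ω ∂P = 0)
    (hvar : ∀ i, ∫ ω, ε i ω ^ 2 ∂P = 1) (hS : MemLp S 2 P) (hh : Summable fun i => h i ^ 2) :
    ∫ ω, S ω ^ 2 ∂P = ∑' i, h i ^ 2 := by
  have := tendsto_integral_mul_of_tendsto_eLpNorm (memLp_sum_range_mul h hL2) hS
    (memLp_sum_range_mul h hL2) hS hlim hlim
  simp only [← sq, integral_sum_range_mul_sq h hL2 hindep hmean hvar] at this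
  exact tendsto_nhds_unique this hh.hasSum.tendsto_sum_nat

lemma IsL2Limit.integral_abs_pow_three_le [IsProbabilityMeasure P]
    (hlim : IsL2Limit P (fun i ω => h i * ε i ω) S)
    (hL2 : ∀ i, MemLp (ε i) 2 P) (hindep : iIndepFun ε P) (hmean : ∀ i, ∫ ω, ε i ω ∂P = 0)
    (hvar : ∀ i, ∫ ω, ε i ω ^ 2 ∂P = 1) {C : ℝ} (hε3 : ∀ i, Integrable (fun ω => |ε i ω| ^ 3) P)
    (hC : ∀ i, ∫ ω, |ε i ω| ^ 3 ∂P ≤ C) (hh : ∀ n, ∑ i ∈ range n, h i ^ 2 ≤ 1) (hS : MemLp S 2 P) :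
    Integrable (fun ω => |S ω| ^ 3) P ∧ ∫ ω, |S ω| ^ 3 ∂P ≤ 3 * (1 + C) := by
  have hC0 : 0 ≤ C := (integral_nonneg fun ω => by positivity).trans (hC 0)
  have hT := memLp_sum_range_mul h hL2
  have hSm := hS.1
  refine integrable_and_integral_le_of_lintegral_ofReal_le (by fun_prop) (fun ω => by positivity)
    (by positivity) ?_
  refine lintegral_comp_le_of_tendstoInMeasure (g := fun x => ENNReal.ofReal (|x| ^ 3))
    (ENNReal.continuous_ofReal.comp (by fun_prop)) (fun n => (hT n).1.aemeasurable)
    (tendstoInMeasure_of_tendsto_eLpNorm two_ne_zero (fun n => (hT n).1) hSm hlim) fun n => ?_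
  obtain ⟨hint, hle⟩ := integral_abs_sum_range_mul_pow_three_le h hL2 hindep hmean hvar hε3 hC hh n
  rw [← ofReal_integral_eq_lintegral_ofReal hint (ae_of_all _ fun ω => by positivity)]
  exact ENNReal.ofReal_le_ofReal hle

end Moments

theorem quantitative_no_arbitrage_large_market_general
    {Ω : Type*} [MeasurableSpace Ω] (P : Measure Ω) [IsProbabilityMeasure P]
    (ε : ℕ → Ω → ℝ)
    (hL2 : ∀ i, MemLp (ε i) 2 P)
    (hindep : iIndepFun ε P)
    (hmean : ∀ i, ∫ ω, ε i ω ∂P = 0)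
    (hvar : ∀ i, ∫ ω, (ε i ω) ^ 2 ∂P = 1)
    (hmom3 : ∃ C : ℝ≥0∞, C ≠ ⊤ ∧
      ∀ i, ∫⁻ ω, ENNReal.ofReal (|ε i ω| ^ 3) ∂P ≤ C) :
    ∃ α : ℝ, 0 < α ∧
      ∀ h : ℕ → ℝ, Summable (fun i => (h i) ^ 2) → (∑' i, (h i) ^ 2) = 1 →
        ∀ S : Ω → ℝ, MemLp S 2 P → IsL2Limit P (fun i ω => h i * ε i ω) S →
          ENNReal.ofReal α < P {ω | S ω < -α} := by
  obtain ⟨C, hCtop, hC⟩ := hmom3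
  have hε3 : ∀ i, Integrable (fun ω => |ε i ω| ^ 3) P ∧ ∫ ω, |ε i ω| ^ 3 ∂P ≤ C.toReal := fun i =>
    have hεm := (hL2 i).1
    integrable_and_integral_le_of_lintegral_ofReal_le (by fun_prop) (fun ω => by positivity)
      ENNReal.toReal_nonneg (by rw [ENNReal.ofReal_toReal hCtop]; exact hC i)
  set K := 3 * (1 + C.toReal)
  refine ⟨K⁻¹ ^ 2 / 16, by positivity, fun h hsum htsum S hS hlim => ?_⟩
  have hh : ∀ n, ∑ i ∈ range n, h i ^ 2 ≤ 1 := fun n =>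
    htsum ▸ hsum.sum_le_tsum _ fun i _ => sq_nonneg (h i)
  obtain ⟨hS3, hS3K⟩ := hlim.integral_abs_pow_three_le hL2 hindep hmean hvar
    (fun i => (hε3 i).1) (fun i => (hε3 i).2) hh hS
  have hSvar : ∫ ω, S ω ^ 2 ∂P = 1 :=
    htsum ▸ hlim.integral_sq_eq_tsum hL2 hindep hmean hvar hS hsum
  exact ofReal_lt_measure_lt_neg_of_le_integral_abs hS (hlim.integral_eq_zero hL2 hmean hS) hSvar
    (by positivity)
    (inv_le_integral_abs_of_integral_abs_pow_three_le (by positivity) hS hS3 hSvar hS3K)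

/-- under Assumptions 1, 2, 3 and 4 there is `α > 0` such that for
every `h ∈ ℓ²` with `‖h‖_{ℓ²} = 1` one has `P(⟨h,ε⟩ < -α) > α`, where `⟨h,ε⟩`
is the `L²(P)`-limit of the partial sums `∑_{i=1}^n h_i ε_i`. -/
theorem quantitative_no_arbitrage_large_market
    {Ω : Type*} [MeasurableSpace Ω] (P : Measure Ω) [IsProbabilityMeasure P]
    (ε : ℕ → Ω → ℝ) (b : ℕ → ℝ)
    (hmeas : ∀ i, Measurable (ε i))
    (hL2 : ∀ i, MemLp (ε i) 2 P)
    (hindep : iIndepFun ε P)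
    (hmean : ∀ i, ∫ ω, ε i ω ∂P = 0)
    (hvar : ∀ i, ∫ ω, (ε i ω) ^ 2 ∂P = 1)
    (hb : Summable (fun i => (b i) ^ 2))
    (hNA : ∀ i, 0 < P {ω | b i < ε i ω} ∧ 0 < P {ω | ε i ω < b i})
    (hmom3 : ∃ C : ℝ≥0∞, C ≠ ⊤ ∧
      ∀ i, ∫⁻ ω, ENNReal.ofReal (|ε i ω| ^ 3) ∂P ≤ C) :
    ∃ α : ℝ, 0 < α ∧
      ∀ h : ℕ → ℝ, Summable (fun i => (h i) ^ 2) → (∑' i, (h i) ^ 2) = 1 →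
        ∀ S : Ω → ℝ, MemLp S 2 P → IsL2Limit P (fun i ω => h i * ε i ω) S →
          ENNReal.ofReal α < P {ω | S ω < -α} :=
  quantitative_no_arbitrage_large_market_general P ε hL2 hindep hmean hvar hmom3
end
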